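/- Let μ and ν be partitions. Then the ℚ-algebra endomorphism of ℚ[p_1, p_2, …] sending p_k ↦ −p_k for every k maps the skew Schur polynomial S_{μ/ν} to (−1)^{|μ|+|ν|} S_{μᵀ/νᵀ}, i.e. S_{μ/ν}(−p) = (−1)^{|μ|+|ν|} S_{μᵀ/νᵀ}(p). -/

import Mathlib

/-- A partition: a non-increasing sequence of non-negative integers
with only finitely many nonzero terms.  `part i` is the part `μ_{i+1}`
(0-based indexing). -/
structure NPartition where
  part : ℕ → ℕ
  antitone : ∀ ⦃i j : ℕ⦄, i ≤ j → part j ≤ part i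
  eventually_zero : ∃ N : ℕ, ∀ i : ℕ, N ≤ i → part i = 0

/-- The conjugate partition: `conj f j = #{i ≥ 1 : f_i ≥ j+1}`. -/
noncomputable def conj (f : ℕ → ℕ) (j : ℕ) : ℕ :=
  Nat.card {i : ℕ // j + 1 ≤ f i}

/-- The number of nonzero parts `ℓ(μ)`. -/
noncomputable def plen (f : ℕ → ℕ) : ℕ :=
  Nat.card {i : ℕ // f i ≠ 0}

/-- The weight `|μ| = Σ_i μ_i`. -/
noncomputable def wsum (f : ℕ → ℕ) : ℕ := ∑ᶠ i : ℕ, f i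

/-- The complete homogeneous generators `h_m ∈ ℚ[p_1, p_2, …]`
(with `p_k` the variable `X (k-1)`), characterized by `h_0 = 1` and the
Newton-type recursion `(m+1) h_{m+1} = Σ_{k=1}^{m+1} p_k h_{m+1-k}`, which is
equivalent (over ℚ) to `Σ_{m≥0} h_m z^m = exp(Σ_{k≥1} (p_k/k) z^k)`. -/
noncomputable def hp : ℕ → MvPolynomial ℕ ℚ
  | 0 => 1
  | m + 1 =>
      ((m : ℚ) + 1)⁻¹ • ∑ k ∈ Finset.range (m + 1), MvPolynomial.X k * hp (m - k)
  decreasing_by exact Nat.lt_succ_of_le (Nat.sub_le m k)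

/-- `h_m` for `m ∈ ℤ`, with `h_m = 0` for `m < 0`. -/
noncomputable def hInt (m : ℤ) : MvPolynomial ℕ ℚ :=
  if 0 ≤ m then hp m.toNat else 0

/-- The skew Jacobi–Trudi determinant
`S_{μ/ν} = det(h_{μ_i − ν_j − i + j})_{1 ≤ i,j ≤ n}` (0-based indexing of parts). -/
noncomputable def Sdet (f g : ℕ → ℕ) (n : ℕ) : MvPolynomial ℕ ℚ :=
  Matrix.det (Matrix.of fun i j : Fin n =>
    hInt ((f i : ℤ) - (g j : ℤ) - (i : ℤ) + (j : ℤ)))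

/-!
Put `H(z) = Σ h_m z^m = exp(Σ p_k z^k / k)`. The substitution `p ↦ -p` turns `H` into `1 / H`
(since `H' = P H` with `P = Σ p_k z^(k-1)`, the product `H(-p) H` has derivative zero), so the
lower triangular Toeplitz matrices `T = (h_{x-y})` and `T' = (h_{x-y}(-p))` of size `2n` are
inverse to each other, and `det T' = 1`. For `n ≥ ℓ(μ), μ_1` the numbers `μ_i + n - 1 - i` and
`n + j - μᵀ_j` (`i, j < n`) enumerate `{0, …, 2n - 1}`. Ordering rows and columns of `T'` and `T`
by these enumerations for `μ` and `ν`, `S_{μ/ν}(-p)` is the leading `n × n` block of `T'` and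
`S_{μᵀ/νᵀ}` the complementary trailing block of `T = T'⁻¹`, so Jacobi's complementary minor
identity relates them; the sign is that of the reordering, whose inversions are the boxes of `μ`
and of `ν`.
-/

open Finset

theorem Matrix.det_toBlocks₁₁_eq_det_mul_det_toBlocks₂₂ {m n R : Type*} [Fintype m] [Fintype n]
    [DecidableEq m] [DecidableEq n] [CommRing R] {M N : Matrix (m ⊕ n) (m ⊕ n) R}
    (h : M * N = 1) : M.toBlocks₁₁.det = M.det * N.toBlocks₂₂.det := by
  rw [← fromBlocks_toBlocks M, ← fromBlocks_toBlocks N, fromBlocks_multiply, ← fromBlocks_one,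
    fromBlocks_inj] at h
  have hM : M * fromBlocks 1 N.toBlocks₁₂ 0 N.toBlocks₂₂ =
      fromBlocks M.toBlocks₁₁ 0 M.toBlocks₂₁ 1 := by
    rw [← fromBlocks_toBlocks M, fromBlocks_multiply, h.2.1, h.2.2.2]
    simp
  simpa [det_fromBlocks_zero₂₁, det_fromBlocks_zero₁₂] using (congrArg det hM).symm

theorem Equiv.Perm.sign_trans_symm {ι : Type*} [Fintype ι] [DecidableEq ι] {m : ℕ}
    (e₁ e₂ : ι ≃ Fin m) :
    sign (e₁.trans e₂.symm) = (-1) ^ #{p : ι × ι | e₂ p.1 < e₂ p.2 ∧ e₁ p.2 < e₁ p.1} := by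
  rw [← sign_permCongr e₂, sign_eq_prod_prod_Iio, ← prod_const, prod_filter,
    Fintype.prod_prod_type_right, ← e₂.prod_comp]
  refine prod_congr rfl fun y _ => ?_
  rw [← filter_gt_eq_Iio, prod_filter, ← e₂.prod_comp]
  refine prod_congr rfl fun x _ => ?_
  have hinj : e₁ x = e₁ y → e₂ x = e₂ y := fun h => by rw [e₁.injective h]
  simp only [permCongr_apply, trans_apply, symm_apply_apply, apply_symm_apply]
  split_ifs <;> grind

theorem Matrix.det_submatrix_equiv_equiv {m n R : Type*} [Fintype m] [DecidableEq m] [Fintype n]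
    [DecidableEq n] [CommRing R] (M : Matrix n n R) (e₁ e₂ : m ≃ n) :
    (M.submatrix e₁ e₂).det = ((Equiv.Perm.sign (e₁.trans e₂.symm) : ℤ) : R) * M.det := by
  have : M.submatrix e₁ e₂ = (M.submatrix e₂ e₂).submatrix (e₁.trans e₂.symm) id := by
    ext; simp
  rw [this, det_permute, det_submatrix_equiv_self]

namespace PowerSeries

open Matrix

theorem derivative_map {R S : Type*} [CommSemiring R] [CommSemiring S] (φ : R →+* S)
    (f : R⟦X⟧) : d⁄dX S (map φ f) = map φ (d⁄dX R f) := by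
  ext n
  simp [coeff_derivative, coeff_map]

variable {R : Type*}

noncomputable def toeplitz [Semiring R] (a : R⟦X⟧) (N : ℕ) : Matrix (Fin N) (Fin N) R :=
  of fun x y => if y ≤ x then coeff (x - y : ℕ) a else 0

theorem toeplitz_mul [Semiring R] (a b : R⟦X⟧) (N : ℕ) :
    toeplitz (a * b) N = toeplitz a N * toeplitz b N := by
  ext x z
  simp only [toeplitz, mul_apply, of_apply, ite_mul, zero_mul, mul_ite, mul_zero, Fin.le_def,
    ← ite_and]
  rw [Fin.sum_univ_eq_sum_range (fun j => if z ≤ j ∧ j ≤ x then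
    coeff (x - j) a * coeff (j - z) b else 0), ← sum_filter]
  have hfilter : {j ∈ range N | (z : ℕ) ≤ j ∧ j ≤ x} = Ico (z : ℕ) (x + 1) := by
    ext j; simp only [mem_filter, mem_range, mem_Ico]; omega
  rw [hfilter, sum_Ico_eq_sum_range, coeff_mul, ← Nat.sum_antidiagonal_swap]
  simp only [Prod.fst_swap, Prod.snd_swap]
  rw [Nat.sum_antidiagonal_eq_sum_range_succ (fun k l => coeff l a * coeff k b)]
  split_ifs with h
  · rw [show x + 1 - z = (x - z : ℕ).succ by omega]
    exact sum_congr rfl fun k _ => by congr 3 <;> omega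
  · rw [show x + 1 - (z : ℕ) = 0 by omega, sum_range_zero]

theorem toeplitz_one [Semiring R] (N : ℕ) : toeplitz (1 : R⟦X⟧) N = 1 := by
  ext x y
  simp only [toeplitz, of_apply, coeff_one, one_apply]
  split_ifs <;> grind

theorem det_toeplitz [CommRing R] (a : R⟦X⟧) (N : ℕ) :
    (toeplitz a N).det = constantCoeff a ^ N := by
  rw [det_of_isLowerTriangular (toeplitz a N) fun x y h =>
    if_neg (not_le.mpr (OrderDual.toDual_lt_toDual.mp h))]
  simp [toeplitz]

theorem toeplitz_map [Semiring R] {S : Type*} [Semiring S] (φ : R →+* S) (a : R⟦X⟧) (N : ℕ) :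
    toeplitz (map φ a) N = φ.mapMatrix (toeplitz a N) := by
  ext x y
  simp only [toeplitz, RingHom.mapMatrix_apply, map_apply, of_apply, coeff_map]
  split_ifs <;> simp

end PowerSeries

open PowerSeries

local notation "Λ" => MvPolynomial ℕ ℚ

noncomputable def negP : Λ →ₐ[ℚ] Λ := MvPolynomial.aeval fun k => -MvPolynomial.X k

noncomputable def hSeries : PowerSeries Λ := mk hp

noncomputable def pSeries : PowerSeries Λ := mk MvPolynomial.X

theorem natCast_mul_hp_succ (m : ℕ) :
    ((m + 1 : ℕ) : Λ) * hp (m + 1) = ∑ k ∈ range (m + 1), MvPolynomial.X k * hp (m - k) := by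
  rw [hp, ← nsmul_eq_mul, ← Nat.cast_smul_eq_nsmul ℚ, smul_smul, Nat.cast_succ,
    mul_inv_cancel₀ (Nat.cast_add_one_ne_zero m), one_smul]

theorem constantCoeff_hSeries : constantCoeff hSeries = 1 := by
  rw [hSeries, ← coeff_zero_eq_constantCoeff_apply, coeff_mk, hp]

theorem derivative_hSeries : d⁄dX Λ hSeries = pSeries * hSeries := by
  ext m
  rw [coeff_derivative, coeff_mul, Nat.sum_antidiagonal_eq_sum_range_succ
    (fun k l => coeff k pSeries * coeff l hSeries)]
  simp only [hSeries, pSeries, coeff_mk]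
  rw [mul_comm, ← natCast_mul_hp_succ]
  push_cast
  ring

theorem map_negP_pSeries : map negP pSeries = -pSeries := by
  ext k
  simp [pSeries, negP]

theorem constantCoeff_map_negP_hSeries : constantCoeff (map negP hSeries) = (1 : Λ) := by
  rw [← coeff_zero_eq_constantCoeff_apply, coeff_map, coeff_zero_eq_constantCoeff_apply,
    constantCoeff_hSeries, map_one]

theorem map_negP_hSeries_mul_hSeries : map negP hSeries * hSeries = 1 := by
  have hneg : d⁄dX Λ (map negP hSeries) = -(pSeries * map negP hSeries) := by
    rw [derivative_map, derivative_hSeries, map_mul, map_negP_pSeries, neg_mul]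
  refine derivative.ext ?_ ?_
  · rw [Derivation.leibniz, hneg, derivative_hSeries, derivative_one, smul_eq_mul, smul_eq_mul]
    ring
  · rw [map_mul, constantCoeff_map_negP_hSeries, constantCoeff_hSeries, one_mul, map_one]

theorem toeplitz_hSeries_apply {N : ℕ} (x y : Fin N) : toeplitz hSeries N x y = hInt (x - y) := by
  simp only [toeplitz, Matrix.of_apply, hSeries, coeff_mk, hInt, Fin.le_def, sub_nonneg,
    Nat.cast_le]
  split_ifs
  · congr
    omega
  · rfl

namespace NPartition
variable (μ : NPartition)

theorem exists_setOf_lt_part_eq_Iio (j : ℕ) : ∃ k, {i | j < μ.part i} = Set.Iio k := by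
  classical
  have hex : ∃ k, μ.part k ≤ j := by
    obtain ⟨N, hN⟩ := μ.eventually_zero
    exact ⟨N, by simp [hN N le_rfl]⟩
  refine ⟨Nat.find hex, Set.ext fun i => ⟨fun hi => Set.mem_Iio.mpr (not_le.mp fun hk => ?_),
    fun hi => not_le.mp (Nat.find_min hex hi)⟩⟩
  exact ((μ.antitone hk).trans (Nat.find_spec hex)).not_gt hi

theorem lt_conj_iff {i j : ℕ} : i < conj μ.part j ↔ j < μ.part i := by
  obtain ⟨k, hk⟩ := μ.exists_setOf_lt_part_eq_Iio j
  have hconj : conj μ.part j = k := by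
    change Nat.card ({i | j < μ.part i} : Set ℕ) = k
    rw [hk, Nat.card_coe_set_eq, Set.ncard_Iio_nat]
  rw [hconj, ← Set.mem_Iio, ← hk, Set.mem_ofPred_eq]

theorem conj_antitone : Antitone (conj μ.part) := fun _ _ hj =>
  le_of_forall_lt fun _ hi => (μ.lt_conj_iff.mpr (hj.trans_lt (μ.lt_conj_iff.mp hi)))

theorem conj_zero : conj μ.part 0 = plen μ.part :=
  Nat.card_congr (Equiv.subtypeEquivRight fun _ => Nat.one_le_iff_ne_zero)

theorem lt_plen_iff {i : ℕ} : i < plen μ.part ↔ μ.part i ≠ 0 := by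
  rw [← conj_zero, lt_conj_iff, Nat.pos_iff_ne_zero]

theorem conj_le_plen (j : ℕ) : conj μ.part j ≤ plen μ.part :=
  μ.conj_zero ▸ μ.conj_antitone (Nat.zero_le j)

theorem part_eq_zero_of_plen_le {i : ℕ} (h : plen μ.part ≤ i) : μ.part i = 0 :=
  not_not.mp fun hi => (μ.lt_plen_iff.mpr hi).not_ge h

theorem wsum_eq_sum_fin {n : ℕ} (h : plen μ.part ≤ n) : wsum μ.part = ∑ i : Fin n, μ.part i := by
  rw [wsum, finsum_eq_sum_of_support_subset _ (s := range n), Fin.sum_univ_eq_sum_range]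
  intro i hi
  simp only [coe_range, Set.mem_Iio]
  exact not_le.mp fun hni => hi (μ.part_eq_zero_of_plen_le (h.trans hni))

/-- The β-numbers `μ_i + n - 1 - i` of `μ` and the numbers `n + j - μᵀ_j`; `betaEquiv` shows that
for `n ≥ ℓ(μ), μ_1` they enumerate `{0, …, 2n - 1}`. -/
noncomputable def betaIndex (n : ℕ) : Fin n ⊕ Fin n → ℕ :=
  Sum.elim (fun i => μ.part i + (n - 1 - i)) (fun j => n + j - conj μ.part j)

variable {μ} {n : ℕ}

theorem strictAnti_betaIndex_inl : StrictAnti fun i : Fin n => μ.betaIndex n (.inl i) := by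
  intro i i' hi
  have := μ.antitone hi.le
  simp only [betaIndex, Sum.elim_inl]
  omega

theorem strictMono_betaIndex_inr (h : plen μ.part ≤ n) :
    StrictMono fun j : Fin n => μ.betaIndex n (.inr j) := by
  intro j j' hj
  have := μ.conj_antitone hj.le
  have := μ.conj_le_plen j
  simp only [betaIndex, Sum.elim_inr]
  omega

theorem betaIndex_inr_lt_inl {i j : Fin n} (h : (j : ℕ) < μ.part i) :
    μ.betaIndex n (.inr j) < μ.betaIndex n (.inl i) := by
  have := μ.lt_conj_iff.mpr h
  simp only [betaIndex, Sum.elim_inl, Sum.elim_inr]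
  omega

theorem betaIndex_inl_lt_inr {i j : Fin n} (h : μ.part i ≤ j) :
    μ.betaIndex n (.inl i) < μ.betaIndex n (.inr j) := by
  have := mt μ.lt_conj_iff.mp h.not_gt
  simp only [betaIndex, Sum.elim_inl, Sum.elim_inr]
  omega

theorem betaIndex_injective (h : plen μ.part ≤ n) : Function.Injective (μ.betaIndex n) := by
  rintro (i | j) (i' | j') heq
  · exact congrArg _ (strictAnti_betaIndex_inl.injective heq)
  · rcases lt_or_ge (j' : ℕ) (μ.part i) with hj | hj
    · exact absurd heq (betaIndex_inr_lt_inl hj).ne'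
    · exact absurd heq (betaIndex_inl_lt_inr hj).ne
  · rcases lt_or_ge (j : ℕ) (μ.part i') with hj | hj
    · exact absurd heq (betaIndex_inr_lt_inl hj).ne
    · exact absurd heq (betaIndex_inl_lt_inr hj).ne'
  · exact congrArg _ ((strictMono_betaIndex_inr h).injective heq)

theorem betaIndex_lt (h₀ : μ.part 0 ≤ n) (x : Fin n ⊕ Fin n) : μ.betaIndex n x < n + n := by
  rcases x with i | j
  · have := μ.antitone (Nat.zero_le i)
    simp only [betaIndex, Sum.elim_inl]
    omega
  · simp only [betaIndex, Sum.elim_inr]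
    omega

noncomputable def betaEquiv (h : plen μ.part ≤ n) (h₀ : μ.part 0 ≤ n) :
    Fin n ⊕ Fin n ≃ Fin (n + n) :=
  Equiv.ofBijective (fun x => ⟨μ.betaIndex n x, betaIndex_lt h₀ x⟩) <| by
    rw [Fintype.bijective_iff_injective_and_card]
    exact ⟨fun x y hxy => betaIndex_injective h (Fin.val_eq_of_eq hxy), by simp⟩

@[simp] theorem betaEquiv_apply_val (h : plen μ.part ≤ n) (h₀ : μ.part 0 ≤ n)
    (x : Fin n ⊕ Fin n) : (μ.betaEquiv h h₀ x : ℕ) = μ.betaIndex n x := rfl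

theorem betaIndex_inr_lt_inl_iff {i j : Fin n} :
    μ.betaIndex n (.inr j) < μ.betaIndex n (.inl i) ↔ (j : ℕ) < μ.part i :=
  ⟨fun hlt => not_le.mp fun hle => (betaIndex_inl_lt_inr hle).not_gt hlt, betaIndex_inr_lt_inl⟩

def empty : NPartition := ⟨0, fun _ _ _ => le_rfl, ⟨0, fun _ _ => rfl⟩⟩

@[simp] theorem empty_part (i : ℕ) : empty.part i = 0 := rfl

theorem plen_empty : plen empty.part = 0 := by simp [plen]

theorem card_inversions_betaIndex (h : plen μ.part ≤ n) (h₀ : μ.part 0 ≤ n) :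
    #{p : (Fin n ⊕ Fin n) × (Fin n ⊕ Fin n) |
      empty.betaIndex n p.1 < empty.betaIndex n p.2 ∧ μ.betaIndex n p.2 < μ.betaIndex n p.1}
      = wsum μ.part := by
  rw [card_filter, Fintype.sum_prod_type, μ.wsum_eq_sum_fin h]
  simp only [Fintype.sum_sum_type, strictAnti_betaIndex_inl.lt_iff_gt,
    (strictMono_betaIndex_inr h).lt_iff_lt,
    (strictMono_betaIndex_inr (plen_empty.trans_le n.zero_le)).lt_iff_lt, betaIndex_inr_lt_inl_iff,
    betaIndex_inl_lt_inr (μ := empty) (Nat.zero_le _), empty_part, true_and]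
  have hasymm : ∀ a b : Fin n, ¬(a < b ∧ b < a) := fun _ _ hab => lt_asymm hab.1 hab.2
  simp [hasymm, Fin.card_filter_val_lt, μ.antitone (Nat.zero_le _) |>.trans h₀]

variable {ν : NPartition}

theorem sign_betaEquiv_trans_symm_empty (h : plen μ.part ≤ n) (h₀ : μ.part 0 ≤ n) :
    Equiv.Perm.sign ((μ.betaEquiv h h₀).trans
      (empty.betaEquiv (plen_empty.trans_le n.zero_le) n.zero_le).symm) = (-1) ^ wsum μ.part := by
  rw [Equiv.Perm.sign_trans_symm, ← card_inversions_betaIndex h h₀]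
  rfl

theorem sign_betaEquiv_trans_symm (hμ : plen μ.part ≤ n) (hμ₀ : μ.part 0 ≤ n)
    (hν : plen ν.part ≤ n) (hν₀ : ν.part 0 ≤ n) :
    Equiv.Perm.sign ((μ.betaEquiv hμ hμ₀).trans (ν.betaEquiv hν hν₀).symm)
      = (-1) ^ (wsum μ.part + wsum ν.part) := by
  set e₀ := empty.betaEquiv (plen_empty.trans_le n.zero_le) n.zero_le
  have : (μ.betaEquiv hμ hμ₀).trans (ν.betaEquiv hν hν₀).symm =
      ((ν.betaEquiv hν hν₀).trans e₀.symm)⁻¹ * (μ.betaEquiv hμ hμ₀).trans e₀.symm := by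
    ext; simp
  rw [this, map_mul, Equiv.Perm.sign_inv, sign_betaEquiv_trans_symm_empty,
    sign_betaEquiv_trans_symm_empty, ← pow_add, add_comm]

theorem betaIndex_inl_sub_betaIndex_inl (i j : Fin n) :
    (μ.betaIndex n (.inl i) : ℤ) - ν.betaIndex n (.inl j) = μ.part i - ν.part j - i + j := by
  simp only [betaIndex, Sum.elim_inl]
  omega

theorem betaIndex_inr_sub_betaIndex_inr (hμ : plen μ.part ≤ n) (hν : plen ν.part ≤ n)
    (i j : Fin n) : (ν.betaIndex n (.inr i) : ℤ) - μ.betaIndex n (.inr j)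
      = conj μ.part j - conj ν.part i - j + i := by
  have := μ.conj_le_plen j
  have := ν.conj_le_plen i
  simp only [betaIndex, Sum.elim_inr]
  omega

end NPartition

open NPartition

theorem negP_Sdet_eq_det_toBlocks₁₁ {μ ν : NPartition} {n : ℕ}
    (hμ : plen μ.part ≤ n) (hμ₀ : μ.part 0 ≤ n) (hν : plen ν.part ≤ n) (hν₀ : ν.part 0 ≤ n) :
    negP (Sdet μ.part ν.part n) = ((toeplitz (map negP hSeries) (n + n)).submatrix
      (μ.betaEquiv hμ hμ₀) (ν.betaEquiv hν hν₀)).toBlocks₁₁.det := by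
  rw [Sdet, AlgHom.map_det]
  congr 1
  refine Matrix.ext fun i j => ?_
  simp [Matrix.toBlocks₁₁, toeplitz_map, toeplitz_hSeries_apply,
    betaIndex_inl_sub_betaIndex_inl]

theorem Sdet_conj_eq_det_toBlocks₂₂ {μ ν : NPartition} {n : ℕ}
    (hμ : plen μ.part ≤ n) (hμ₀ : μ.part 0 ≤ n) (hν : plen ν.part ≤ n) (hν₀ : ν.part 0 ≤ n) :
    Sdet (conj μ.part) (conj ν.part) n = ((toeplitz hSeries (n + n)).submatrix
      (ν.betaEquiv hν hν₀) (μ.betaEquiv hμ hμ₀)).toBlocks₂₂.det := by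
  rw [Sdet, ← Matrix.det_transpose]
  congr 1
  refine Matrix.ext fun i j => ?_
  simp [Matrix.toBlocks₂₂, toeplitz_hSeries_apply, betaIndex_inr_sub_betaIndex_inr hμ hν]

/-- The ℚ-algebra endomorphism of ℚ[p_1, p_2, …] sending `p_k ↦ −p_k` maps the
skew Schur polynomial `S_{μ/ν}` to `(−1)^{|μ|+|ν|} S_{μᵀ/νᵀ}`, for any
determinant size `n ≥ max(ℓ(μ), ℓ(ν), μ_1, ν_1)`. -/
theorem skew_schur_neg_p (μ ν : NPartition) (n : ℕ)
    (h1 : plen μ.part ≤ n) (h2 : plen ν.part ≤ n)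
    (h3 : μ.part 0 ≤ n) (h4 : ν.part 0 ≤ n) :
    MvPolynomial.aeval (fun k : ℕ => - (MvPolynomial.X k : MvPolynomial ℕ ℚ))
        (Sdet μ.part ν.part n)
      = (-1) ^ (wsum μ.part + wsum ν.part) * Sdet (conj μ.part) (conj ν.part) n := by
  set eμ := μ.betaEquiv h1 h3
  set eν := ν.betaEquiv h2 h4
  have hinv : (toeplitz (map negP hSeries) (n + n)).submatrix eμ eν *
      (toeplitz hSeries (n + n)).submatrix eν eμ = 1 := by
    rw [Matrix.submatrix_mul_equiv, ← toeplitz_mul, map_negP_hSeries_mul_hSeries, toeplitz_one,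
      Matrix.submatrix_one_equiv]
  have hjacobi := Matrix.det_toBlocks₁₁_eq_det_mul_det_toBlocks₂₂ hinv
  rw [Matrix.det_submatrix_equiv_equiv, det_toeplitz, constantCoeff_map_negP_hSeries, one_pow,
    mul_one, sign_betaEquiv_trans_symm] at hjacobi
  change negP _ = _
  rw [negP_Sdet_eq_det_toBlocks₁₁ h1 h3 h2 h4, Sdet_conj_eq_det_toBlocks₂₂ h1 h3 h2 h4, hjacobi]
  push_cast
  rfl
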